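/- Proposition 7. Let N ≥ 2 and let μ be an integer with 1 ≤ μ ≤ N−1. Set b̄(z) = q(1−z)/(q²−z) and c̄(z) = (q²−1)/(q²−z). For μ = 1 define A₁ = (q w₁' − w₀), B₁ = −b̄(w₀'/w₀)(w₁' − q w₀), C₁ = −c̄(w₀'/w₀)(q w₁' − w₀'); for 2 ≤ μ ≤ N−1 define A_μ = Π_{j=0}^{μ−2} (w_{j+1} − q w_j')(q w_{j+1}' − w_j) · (q w_μ' − w_{μ−1}), B_μ = −b̄(w₀'/w₀)(w₁ − q w₀)(q w₁' − w₀') · Π_{j=1}^{μ−2} (w_{j+1} − q w_j')(q w_{j+1}' − w_j) · (w_μ' − q w_{μ−1}'), and C_μ = −c̄(w₀'/w₀)(w₁ − q w₀)(q w₁' − w₀') · Π_{j=1}^{μ−2} (w_{j+1} − q w_j')(q w_{j+1}' − w_j) · (q w_μ' − w_{μ−1}). Then A_μ + B_μ + C_μ ∼ 0 with respect to the pairs (w₁, w₁'), …, (w_{μ−1}, w_{μ−1}'), all carrying the fermionic exchange factor H^f (the ŝl(0|N) setting); here w₀, w₀' and w_μ' are further free variables, and for μ = 1 the weak equality is the plain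 identity A₁ + B₁ + C₁ = 0. -/

import Mathlib

/-- Bosonic exchange factor `H^b(u,v) = -(q²v - u)/(q²u - v)`. -/
noncomputable def Hb (q u v : ℂ) : ℂ := -(q ^ 2 * v - u) / (q ^ 2 * u - v)

/-- Fermionic exchange factor `H^f(u,v) = -(q²u - v)/(q²v - u)`. -/
noncomputable def Hf (q u v : ℂ) : ℂ := -(q ^ 2 * u - v) / (q ^ 2 * v - u)

/-- Exchange factor assignment for `U_q(sl^(M|N))`: bosonic for `j < M`,
the constant `-1` for `j = M`, fermionic for `j > M`. -/
noncomputable def Hex (M : ℕ) (q : ℂ) (j : ℕ) : ℂ → ℂ → ℂ :=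
  if j < M then Hb q else if j = M then fun _ _ => -1 else Hf q

/-- Interchange `w_j` and `w_j'` for every `j ∈ σ`. -/
def swapOn (σ : Finset ℕ) (w w' : ℕ → ℂ) : ℕ → ℂ := fun j => if j ∈ σ then w' j else w j

/-- Weak equality `F ∼ G` with respect to the pairs `(w_j, w_j')`, `j ∈ J`,
carrying exchange factors `H j`. -/
def WeakEq (J : Finset ℕ) (H : ℕ → ℂ → ℂ → ℂ) (w w' : ℕ → ℂ)
    (F G : (ℕ → ℂ) → (ℕ → ℂ) → ℂ) : Prop :=
  ∑ σ ∈ J.powerset, (∏ j ∈ σ, H j (w' j) (w j)) * F (swapOn σ w w') (swapOn σ w' w)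
    = ∑ σ ∈ J.powerset, (∏ j ∈ σ, H j (w' j) (w j)) * G (swapOn σ w w') (swapOn σ w' w)

/-- `b̄(z) = q(1−z)/(q²−z)`. -/
noncomputable def bbar (q z : ℂ) : ℂ := q * (1 - z) / (q ^ 2 - z)

/-- `c̄(z) = (q²−1)/(q²−z)`. -/
noncomputable def cbar (q z : ℂ) : ℂ := (q ^ 2 - 1) / (q ^ 2 - z)

/-
Multiplying the weak-equality sum by `∏_{j<μ} (q² w_j − w_j')` turns it into an
antisymmetrisation over the pairs `1, …, μ−1` with polynomial weights, and multiplying the summand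
by `q² w₀ − w₀'` clears the denominators of `b̄` and `c̄`. After both steps the summand is
`(∏_{1 ≤ j < ν} ℓ_j) · (a · f(w_ν, w_ν') + b · g(w_ν, w_ν'))` with `ν = μ − 1`, `ℓ_j` the link
factors, `a, b` depending only on the pairs `0, 1`, and `(f, g)` a pair of affine functions.
Antisymmetrising the top pair `ν` absorbs `ℓ_{ν−1}` into `(f, g)`, leaving a summand of the same
shape one step lower. Doing this twice to an affine pair gives the same result as doing it once to
another affine pair, so induction on `ν` reduces everything to two polynomial identities at
`ν = 1`.
-/

namespace FermionicChain

open Finset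

lemma swapOn_empty (w w' : ℕ → ℂ) : swapOn ∅ w w' = w := by
  funext j; simp [swapOn]

lemma swapOn_of_notMem {σ : Finset ℕ} {j : ℕ} (h : j ∉ σ) (w w' : ℕ → ℂ) :
    swapOn σ w w' j = w j := by
  simp [swapOn, h]

lemma swapOn_singleton_self (k : ℕ) (w w' : ℕ → ℂ) : swapOn {k} w w' k = w' k := by
  simp [swapOn]

lemma swapOn_singleton_of_ne {j k : ℕ} (h : j ≠ k) (w w' : ℕ → ℂ) : swapOn {k} w w' j = w j :=
  swapOn_of_notMem (by simpa using h) w w'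

lemma swapOn_insert {σ : Finset ℕ} {k : ℕ} (h : k ∉ σ) (w w' : ℕ → ℂ) :
    swapOn (insert k σ) w w' = swapOn {k} (swapOn σ w w') (swapOn σ w' w) := by
  funext j
  by_cases hjk : j = k
  · subst hjk; simp [swapOn, h]
  · by_cases hjσ : j ∈ σ <;> simp [swapOn, hjk, hjσ]

/-- The weak-equality sum for fermionic pairs, multiplied by `∏_{j ∈ J} (q² w_j − w_j')`. -/
noncomputable def fermionicSum (q : ℂ) (w w' : ℕ → ℂ) (J : Finset ℕ)
    (F : (ℕ → ℂ) → (ℕ → ℂ) → ℂ) : ℂ :=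
  ∑ σ ∈ J.powerset, ((∏ j ∈ σ, -(q ^ 2 * w' j - w j)) * ∏ j ∈ J \ σ, (q ^ 2 * w j - w' j)) *
    F (swapOn σ w w') (swapOn σ w' w)

section fermionicSum

variable {q : ℂ} {w w' : ℕ → ℂ}

lemma fermionicSum_empty (F : (ℕ → ℂ) → (ℕ → ℂ) → ℂ) : fermionicSum q w w' ∅ F = F w w' := by
  simp [fermionicSum, swapOn_empty]

lemma fermionicSum_congr {J : Finset ℕ} {F G : (ℕ → ℂ) → (ℕ → ℂ) → ℂ}
    (h : ∀ σ ⊆ J, F (swapOn σ w w') (swapOn σ w' w) = G (swapOn σ w w') (swapOn σ w' w)) :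
    fermionicSum q w w' J F = fermionicSum q w w' J G :=
  sum_congr rfl fun σ hσ => by rw [h σ (mem_powerset.1 hσ)]

lemma fermionicSum_mul_left (J : Finset ℕ) (c : ℂ) (F : (ℕ → ℂ) → (ℕ → ℂ) → ℂ) :
    fermionicSum q w w' J (fun u u' => c * F u u') = c * fermionicSum q w w' J F := by
  simp only [fermionicSum, mul_sum]
  exact sum_congr rfl fun _ _ => by ring

lemma fermionicSum_insert {J : Finset ℕ} {k : ℕ} (hk : k ∉ J) (F : (ℕ → ℂ) → (ℕ → ℂ) → ℂ) :
    fermionicSum q w w' (insert k J) F = fermionicSum q w w' J (fun u u' =>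
      (q ^ 2 * w k - w' k) * F u u' -
        (q ^ 2 * w' k - w k) * F (swapOn {k} u u') (swapOn {k} u' u)) := by
  rw [fermionicSum, sum_powerset_insert hk, fermionicSum, ← sum_add_distrib]
  refine sum_congr rfl fun σ hσ => ?_
  have hkσ : k ∉ σ := fun h => hk (mem_powerset.1 hσ h)
  rw [insert_sdiff_of_notMem _ hkσ, insert_sdiff_insert, sdiff_insert_of_notMem hk,
    prod_insert (fun h => hk (mem_sdiff.1 h).1), prod_insert hkσ, swapOn_insert hkσ,
    swapOn_insert hkσ]
  ring

end fermionicSum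

lemma prod_Hf_mul_prod {q : ℂ} {w w' : ℕ → ℂ} {σ J : Finset ℕ} (hσ : σ ⊆ J)
    (hden : ∀ j ∈ J, q ^ 2 * w j ≠ w' j) :
    (∏ j ∈ σ, Hf q (w' j) (w j)) * ∏ j ∈ J, (q ^ 2 * w j - w' j) =
      (∏ j ∈ σ, -(q ^ 2 * w' j - w j)) * ∏ j ∈ J \ σ, (q ^ 2 * w j - w' j) := by
  rw [← prod_sdiff hσ, mul_left_comm, ← prod_mul_distrib, mul_comm]
  congr 1
  exact prod_congr rfl fun j hj => div_mul_cancel₀ _ (sub_ne_zero.2 (hden j (hσ hj)))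

lemma weakEq_Hf_zero_of_fermionicSum_eq_zero {q : ℂ} {w w' : ℕ → ℂ} {J : Finset ℕ}
    (hden : ∀ j ∈ J, q ^ 2 * w j ≠ w' j) {F : (ℕ → ℂ) → (ℕ → ℂ) → ℂ}
    (h : fermionicSum q w w' J F = 0) : WeakEq J (fun _ => Hf q) w w' F (fun _ _ => 0) := by
  have hD : ∏ j ∈ J, (q ^ 2 * w j - w' j) ≠ 0 :=
    prod_ne_zero_iff.2 fun j hj => sub_ne_zero.2 (hden j hj)
  simp only [WeakEq, mul_zero, sum_const_zero]
  refine (mul_eq_zero.1 ?_).resolve_right hD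
  rw [sum_mul, ← h, fermionicSum]
  refine sum_congr rfl fun σ hσ => ?_
  rw [mul_right_comm, prod_Hf_mul_prod (mem_powerset.1 hσ) hden]

noncomputable def link (q : ℂ) (u u' : ℕ → ℂ) (j : ℕ) : ℂ :=
  (u (j + 1) - q * u' j) * (q * u' (j + 1) - u j)

noncomputable def linkProd (q : ℂ) (ν : ℕ) (u u' : ℕ → ℂ) : ℂ :=
  ∏ j ∈ Ico 1 ν, link q u u' j

/-! `headA` and `headB` are the coefficients left after multiplying by `q² a − a'`, which clears
the denominator `q² − a'/a` of `b̄(a'/a)` and `c̄(a'/a)`. -/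

noncomputable def headA (q a a' b b' : ℂ) : ℂ :=
  (q ^ 2 * a - a') * ((b - q * a') * (q * b' - a)) -
    (q ^ 2 - 1) * a * ((b - q * a) * (q * b' - a'))

noncomputable def headB (q a a' b b' : ℂ) : ℂ :=
  -(q * (a - a')) * ((b - q * a) * (q * b' - a'))

noncomputable def chainTerm (q : ℂ) (ν : ℕ) (f g : ℂ → ℂ → ℂ) (u u' : ℕ → ℂ) : ℂ :=
  linkProd q ν u u' *
    (headA q (u 0) (u' 0) (u 1) (u' 1) * f (u ν) (u' ν) +
      headB q (u 0) (u' 0) (u 1) (u' 1) * g (u ν) (u' ν))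

def affineA (q r m : ℂ) : ℂ → ℂ → ℂ := fun s _ => q * r - m * s

def affineB (q r m : ℂ) : ℂ → ℂ → ℂ := fun _ t => r - q * m * t

/-- Antisymmetrisation of a pair with values `(X, Y)` against its link factor to the pair below,
whose values are `(s, t)`. -/
def linkAntisymm (q X Y : ℂ) (f : ℂ → ℂ → ℂ) : ℂ → ℂ → ℂ := fun s t =>
  (q ^ 2 * X - Y) * ((X - q * t) * (q * Y - s)) * f X Y -
    (q ^ 2 * Y - X) * ((Y - q * t) * (q * X - s)) * f Y X

lemma exists_linkAntisymm_linkAntisymm_affine (q x y r m X Y : ℂ) :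
    ∃ r' m', linkAntisymm q X Y (linkAntisymm q x y (affineA q r m)) =
        linkAntisymm q X Y (affineA q r' m') ∧
      linkAntisymm q X Y (linkAntisymm q x y (affineB q r m)) =
        linkAntisymm q X Y (affineB q r' m') := by
  set m' := m * (q ^ 2 * x - y) * (q ^ 2 * y - x) * (x - y)
  refine ⟨linkAntisymm q x y (affineB q r m) X Y + q * m' * Y, m', ?_, ?_⟩ <;>
  · funext s t
    simp only [linkAntisymm, affineA, affineB, m']
    ring

lemma linkProd_succ (q : ℂ) {n : ℕ} (hn : 1 ≤ n) (u u' : ℕ → ℂ) :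
    linkProd q (n + 1) u u' = linkProd q n u u' * link q u u' n :=
  prod_Ico_succ_top hn _

lemma linkProd_swapOn_singleton (q : ℂ) {n k : ℕ} (hk : n < k) (u u' : ℕ → ℂ) :
    linkProd q n (swapOn {k} u u') (swapOn {k} u' u) = linkProd q n u u' := by
  refine prod_congr rfl fun j hj => ?_
  have hj := (mem_Ico.1 hj).2
  rw [link, link, swapOn_singleton_of_ne (by omega), swapOn_singleton_of_ne (by omega),
    swapOn_singleton_of_ne (by omega), swapOn_singleton_of_ne (by omega)]

lemma chainTerm_succ_sub_swapOn (q : ℂ) {n : ℕ} (hn : 1 ≤ n) (f g : ℂ → ℂ → ℂ) (u u' : ℕ → ℂ) :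
    (q ^ 2 * u (n + 1) - u' (n + 1)) * chainTerm q (n + 1) f g u u' -
        (q ^ 2 * u' (n + 1) - u (n + 1)) *
          chainTerm q (n + 1) f g (swapOn {n + 1} u u') (swapOn {n + 1} u' u) =
      chainTerm q n (linkAntisymm q (u (n + 1)) (u' (n + 1)) f)
        (linkAntisymm q (u (n + 1)) (u' (n + 1)) g) u u' := by
  simp only [chainTerm, linkProd_succ q hn, linkProd_swapOn_singleton q (Nat.lt_succ_self n),
    link, linkAntisymm, swapOn_singleton_self, swapOn_singleton_of_ne (show 0 ≠ n + 1 by omega),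
    swapOn_singleton_of_ne (show 1 ≠ n + 1 by omega),
    swapOn_singleton_of_ne (show n ≠ n + 1 by omega)]
  ring

lemma fermionicSum_chainTerm_succ (q : ℂ) (w w' : ℕ → ℂ) {n : ℕ} (hn : 1 ≤ n)
    (f g : ℂ → ℂ → ℂ) :
    fermionicSum q w w' (Ico 1 (n + 2)) (chainTerm q (n + 1) f g) =
      fermionicSum q w w' (Ico 1 (n + 1))
        (chainTerm q n (linkAntisymm q (w (n + 1)) (w' (n + 1)) f)
          (linkAntisymm q (w (n + 1)) (w' (n + 1)) g)) := by
  rw [Nat.Ico_succ_right_eq_insert_Ico (by omega), fermionicSum_insert (by simp)]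
  refine fermionicSum_congr fun σ hσ => ?_
  have hσ : n + 1 ∉ σ := fun h => by have := mem_Ico.1 (hσ h); omega
  rw [← swapOn_of_notMem hσ w w', ← swapOn_of_notMem hσ w' w]
  exact chainTerm_succ_sub_swapOn q hn f g _ _

lemma fermionicSum_chainTerm_one (q : ℂ) (w w' : ℕ → ℂ) (f g : ℂ → ℂ → ℂ) :
    fermionicSum q w w' (Ico 1 2) (chainTerm q 1 f g) =
      (q ^ 2 * w 1 - w' 1) * (headA q (w 0) (w' 0) (w 1) (w' 1) * f (w 1) (w' 1) +
          headB q (w 0) (w' 0) (w 1) (w' 1) * g (w 1) (w' 1)) -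
        (q ^ 2 * w' 1 - w 1) * (headA q (w 0) (w' 0) (w' 1) (w 1) * f (w' 1) (w 1) +
          headB q (w 0) (w' 0) (w' 1) (w 1) * g (w' 1) (w 1)) := by
  rw [show Ico 1 2 = insert 1 ∅ from rfl, fermionicSum_insert (notMem_empty 1),
    fermionicSum_empty]
  simp [chainTerm, linkProd, swapOn]

lemma fermionicSum_chainTerm_linkAntisymm_affine_eq_zero (q : ℂ) (w w' : ℕ → ℂ) {n : ℕ}
    (hn : 1 ≤ n) (x y r m : ℂ) :
    fermionicSum q w w' (Ico 1 (n + 1))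
      (chainTerm q n (linkAntisymm q x y (affineA q r m))
        (linkAntisymm q x y (affineB q r m))) = 0 := by
  induction n, hn using Nat.le_induction generalizing x y r m with
  | base =>
    rw [fermionicSum_chainTerm_one]
    simp only [headA, headB, linkAntisymm, affineA, affineB]
    ring
  | succ n hn ih =>
    rw [fermionicSum_chainTerm_succ q w w' hn]
    obtain ⟨r', m', hA, hB⟩ :=
      exists_linkAntisymm_linkAntisymm_affine q x y r m (w (n + 1)) (w' (n + 1))
    rw [hA, hB]
    exact ih _ _ _ _

lemma fermionicSum_chainTerm_affine_eq_zero (q : ℂ) (w w' : ℕ → ℂ) {ν : ℕ} (hν : 1 ≤ ν)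
    (r m : ℂ) :
    fermionicSum q w w' (Ico 1 (ν + 1)) (chainTerm q ν (affineA q r m) (affineB q r m)) = 0 := by
  obtain rfl | ⟨n, hn, rfl⟩ : ν = 1 ∨ ∃ n, 1 ≤ n ∧ ν = n + 1 :=
    (eq_or_lt_of_le hν).imp Eq.symm fun h => ⟨ν - 1, by omega, by omega⟩
  · rw [fermionicSum_chainTerm_one]
    simp only [headA, headB, affineA, affineB]
    ring
  · rw [fermionicSum_chainTerm_succ q w w' hn]
    exact fermionicSum_chainTerm_linkAntisymm_affine_eq_zero q w w' hn _ _ _ _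

lemma sq_sub_div_ne_zero {q a a' : ℂ} (ha : a ≠ 0) (ha' : q ^ 2 * a ≠ a') :
    q ^ 2 - a' / a ≠ 0 := by
  rwa [sub_ne_zero, ne_eq, eq_div_iff ha]

lemma affine_sub_bbar_sub_cbar {q a a' : ℂ} (ha : a ≠ 0) (ha' : q ^ 2 * a ≠ a') (T : ℂ) :
    (q * T - a) + -bbar q (a' / a) * (T - q * a) + -cbar q (a' / a) * (q * T - a') = 0 := by
  have := sq_sub_div_ne_zero ha ha'
  simp only [bbar, cbar]
  field_simp
  ring

lemma mul_chain_bbar_cbar_eq_chainTerm {q : ℂ} {ν : ℕ} (hν : 1 ≤ ν) {u u' : ℕ → ℂ}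
    (hu : u 0 ≠ 0) (hu' : q ^ 2 * u 0 ≠ u' 0) :
    (q ^ 2 * u 0 - u' 0) *
      ((∏ j ∈ range ν, (u (j + 1) - q * u' j) * (q * u' (j + 1) - u j)) *
          (q * u' (ν + 1) - u ν) +
        (-(bbar q (u' 0 / u 0)) * ((u 1 - q * u 0) * (q * u' 1 - u' 0)) *
          (∏ j ∈ Ico 1 ν, (u (j + 1) - q * u' j) * (q * u' (j + 1) - u j)) *
          (u' (ν + 1) - q * u' ν)) +
        (-(cbar q (u' 0 / u 0)) * ((u 1 - q * u 0) * (q * u' 1 - u' 0)) *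
          (∏ j ∈ Ico 1 ν, (u (j + 1) - q * u' j) * (q * u' (j + 1) - u j)) *
          (q * u' (ν + 1) - u ν))) =
      chainTerm q ν (affineA q (u' (ν + 1)) 1) (affineB q (u' (ν + 1)) 1) u u' := by
  have := sq_sub_div_ne_zero hu hu'
  rw [prod_range_eq_mul_Ico _ hν]
  simp only [chainTerm, linkProd, link, headA, headB, affineA, affineB, bbar, cbar]
  field_simp
  ring

end FermionicChain

open FermionicChain

theorem proposition7_general (μ : ℕ) (hμ1 : 1 ≤ μ)
    (q : ℂ) (w w' : ℕ → ℂ)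
    (hw0 : w 0 ≠ 0) (hw0' : q ^ 2 * w 0 ≠ w' 0)
    (hden : ∀ j ∈ Finset.Ico 1 μ, q ^ 2 * w j ≠ w' j) :
    WeakEq (Finset.Ico 1 μ) (fun _ => Hf q) w w'
      (fun u u' =>
        if μ = 1 then
          (q * u' 1 - u 0) + (-(bbar q (u' 0 / u 0)) * (u' 1 - q * u 0)) +
            (-(cbar q (u' 0 / u 0)) * (q * u' 1 - u' 0))
        else
          (∏ j ∈ Finset.range (μ - 1), (u (j + 1) - q * u' j) * (q * u' (j + 1) - u j)) *
              (q * u' μ - u (μ - 1)) +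
            (-(bbar q (u' 0 / u 0)) * ((u 1 - q * u 0) * (q * u' 1 - u' 0)) *
              (∏ j ∈ Finset.Ico 1 (μ - 1),
                (u (j + 1) - q * u' j) * (q * u' (j + 1) - u j)) *
              (u' μ - q * u' (μ - 1))) +
            (-(cbar q (u' 0 / u 0)) * ((u 1 - q * u 0) * (q * u' 1 - u' 0)) *
              (∏ j ∈ Finset.Ico 1 (μ - 1),
                (u (j + 1) - q * u' j) * (q * u' (j + 1) - u j)) *
              (q * u' μ - u (μ - 1))))
      (fun _ _ => 0) := by
  rcases eq_or_ne μ 1 with rfl | hμ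
  · simp only [WeakEq, Finset.Ico_self, Finset.powerset_empty, Finset.sum_singleton,
      Finset.prod_empty, one_mul, swapOn_empty, if_true]
    exact affine_sub_bbar_sub_cbar hw0 hw0' _
  obtain ⟨ν, rfl⟩ : ∃ ν, μ = ν + 1 := ⟨μ - 1, by omega⟩
  have hν : 1 ≤ ν := by omega
  refine weakEq_Hf_zero_of_fermionicSum_eq_zero hden
    ((mul_eq_zero.1 ?_).resolve_left (sub_ne_zero.2 hw0'))
  rw [← fermionicSum_mul_left,
    ← fermionicSum_chainTerm_affine_eq_zero q w w' hν (w' (ν + 1)) 1]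
  refine fermionicSum_congr fun σ hσ => ?_
  have h0 : 0 ∉ σ := fun h => by have := Finset.mem_Ico.1 (hσ h); omega
  have htop : ν + 1 ∉ σ := fun h => by have := Finset.mem_Ico.1 (hσ h); omega
  simp only [if_neg hμ, Nat.add_sub_cancel]
  have hu : swapOn σ w w' 0 ≠ 0 := by rwa [swapOn_of_notMem h0]
  have hu' : q ^ 2 * swapOn σ w w' 0 ≠ swapOn σ w' w 0 := by
    rwa [swapOn_of_notMem h0, swapOn_of_notMem h0]
  rw [← swapOn_of_notMem h0 w w', ← swapOn_of_notMem h0 w' w,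
    mul_chain_bbar_cbar_eq_chainTerm hν hu hu', swapOn_of_notMem htop]

/-- Proposition 7: `A_μ + B_μ + C_μ ∼ 0` with respect to the fermionic pairs
`(w₁, w₁'), …, (w_{μ−1}, w_{μ−1}')`; for `μ = 1` this is the plain identity
`A₁ + B₁ + C₁ = 0`. -/
theorem proposition7 (N : ℕ) (hN : 2 ≤ N) (μ : ℕ) (hμ1 : 1 ≤ μ) (hμ2 : μ ≤ N - 1)
    (q : ℂ) (hq : q ≠ 0) (hq2 : q ^ 2 ≠ 1) (w w' : ℕ → ℂ)
    (hw0 : w 0 ≠ 0) (hw0' : q ^ 2 * w 0 ≠ w' 0)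
    (hden : ∀ j ∈ Finset.Ico 1 μ, q ^ 2 * w j ≠ w' j) :
    WeakEq (Finset.Ico 1 μ) (fun _ => Hf q) w w'
      (fun u u' =>
        if μ = 1 then
          (q * u' 1 - u 0) + (-(bbar q (u' 0 / u 0)) * (u' 1 - q * u 0)) +
            (-(cbar q (u' 0 / u 0)) * (q * u' 1 - u' 0))
        else
          (∏ j ∈ Finset.range (μ - 1), (u (j + 1) - q * u' j) * (q * u' (j + 1) - u j)) *
              (q * u' μ - u (μ - 1)) +
            (-(bbar q (u' 0 / u 0)) * ((u 1 - q * u 0) * (q * u' 1 - u' 0)) *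
              (∏ j ∈ Finset.Ico 1 (μ - 1),
                (u (j + 1) - q * u' j) * (q * u' (j + 1) - u j)) *
              (u' μ - q * u' (μ - 1))) +
            (-(cbar q (u' 0 / u 0)) * ((u 1 - q * u 0) * (q * u' 1 - u' 0)) *
              (∏ j ∈ Finset.Ico 1 (μ - 1),
                (u (j + 1) - q * u' j) * (q * u' (j + 1) - u j)) *
              (q * u' μ - u (μ - 1))))
      (fun _ _ => 0) :=
  proposition7_general μ hμ1 q w w' hw0 hw0' hden
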